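/- (Lemma on non-degeneracy of linear ODEs with symmetric coefficient, Lemma 5 of the paper) Let z, q ∈ C¹([0,T]; ℝᵈ) and A, B ∈ C([0,T]; ℝ^{d×d}) satisfy ż(t) = -A(t)q(t) - B(t)z(t). Suppose there exist constants C, θ > 0 such that |z(t)|, |q(t)| ≤ C, z(t)·q(t) ≤ C|z(t)|² for all t, |A(t)|, |B(t)| ≤ C, A(t) ≥ θI (A symmetric positive definite with smallest eigenvalue ≥ θ), and A is Lipschitz in t with constant C. Then there exists a constant C₁ > 0, depending only on C, θ, T, such that |z(t)| ≥ C₁|z(0)| for all t ∈ [0,T]. -/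

import Mathlib

/-!
The energy `g t = ⟪z t, (A t)⁻¹ z t⟫` is comparable to `‖z t‖²`: coercivity and `‖A‖ ≤ C`
give `θ ‖z‖² ≤ C² g` and `θ g ≤ ‖z‖²`. Freezing the coefficient at a time `s`, the derivative
of `⟪z, (A s)⁻¹ z⟫` at `s` is `-2 ⟪z, q⟫ - 2 ⟪A⁻¹ z, B z⟫`, since `A⁻¹` is symmetric and
`⟪A⁻¹ z, A q⟫ = ⟪z, q⟫`; by `⟪z, q⟫ ≤ C ‖z‖²` this is at least a negative multiple of `‖z‖²`.
As `A⁻¹` is only Lipschitz, unfreezing costs another `O(‖z‖²)`, so the lower right Dini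
derivative of `g` is at least `-K g`, and a Gronwall argument gives `g t ≥ g 0 e^{-K t}`.
-/

open Set Filter Topology Real
open scoped RealInnerProductSpace Ring

theorem eventually_lt_slope_of_hasDerivAt {f φ m : ℝ → ℝ} {x D r : ℝ}
    (hφ : HasDerivAt φ D x) (hm : ContinuousWithinAt m (Ioi x) x)
    (hle : ∀ᶠ y in 𝓝[>] x, φ y - φ x - m y * (y - x) ≤ f y - f x) (hr : r < D - m x) :
    ∀ᶠ y in 𝓝[>] x, r < slope f x y := by
  have hlim : Tendsto (fun y => slope φ x y - m y) (𝓝[>] x) (𝓝 (D - m x)) :=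
    ((hasDerivWithinAt_iff_tendsto_slope' (lt_irrefl x)).mp hφ.hasDerivWithinAt).sub hm
  filter_upwards [hlim.eventually_const_lt hr, hle, self_mem_nhdsWithin]
    with y hlt hy (hxy : x < y)
  refine hlt.trans_le ?_
  rw [slope_def_field, slope_def_field, le_div_iff₀ (sub_pos.2 hxy), sub_mul,
    div_mul_cancel₀ _ (sub_pos.2 hxy).ne']
  exact hy

theorem mul_exp_le_of_frequently_lt_slope {g : ℝ → ℝ} {a b K : ℝ}
    (hg : ContinuousOn g (Icc a b))
    (hg' : ∀ x ∈ Ico a b, ∀ r < -K * g x, ∃ᶠ y in 𝓝[>] x, r < slope g x y) :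
    ∀ x ∈ Icc a b, g a * exp (-K * (x - a)) ≤ g x := by
  intro x hx
  have hf' : ∀ x ∈ Ico a b, ∀ r, K * g x < r →
      ∃ᶠ y in 𝓝[>] x, (y - x)⁻¹ * (-g y - -g x) < r := fun x hx r hr =>
    (hg' x hx (-r) (by linarith)).mono fun y hy => by
      rw [slope_def_field] at hy
      have : (y - x)⁻¹ * (-g y - -g x) = -((g y - g x) / (y - x)) := by ring
      linarith
  have := le_gronwallBound_of_liminf_deriv_right_le hg.neg hf' le_rfl
    (fun x _ => le_of_eq (by ring : K * g x = -K * -g x + 0)) x hx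
  rw [gronwallBound_ε0, Pi.neg_apply, Pi.neg_apply] at this
  linarith

section InnerProductSpace

variable {E : Type*} [NormedAddCommGroup E] [InnerProductSpace ℝ E]

namespace ContinuousLinearMap

variable {A : E →L[ℝ] E} {θ : ℝ}

theorem isUnit_of_coercive [CompleteSpace E] (hθ : 0 < θ)
    (hA : ∀ v, θ * ‖v‖ ^ 2 ≤ ⟪v, A v⟫) : IsUnit A := by
  have hB : IsCoercive ((innerSL ℝ).comp A) :=
    ⟨θ, hθ, fun u => by simpa [sq, mul_assoc, real_inner_comm] using hA u⟩
  exact ⟨hB.continuousLinearEquivOfBilin.toUnit,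
    ext fun v => ext_inner_right ℝ fun w => hB.continuousLinearEquivOfBilin_apply v w⟩

theorem apply_inverse_apply (hu : IsUnit A) (v : E) : A (A⁻¹ʳ v) = v := by
  simpa using congr($(Ring.mul_inverse_cancel A hu) v)

theorem isSymmetric_inverse [CompleteSpace E] (hA : (A : E →ₗ[ℝ] E).IsSymmetric) :
    ((A⁻¹ʳ : E →L[ℝ] E) : E →ₗ[ℝ] E).IsSymmetric :=
  isSelfAdjoint_iff_isSymmetric.mp (isSelfAdjoint_iff_isSymmetric.mpr hA).ringInverse

theorem mul_sq_norm_inverse_apply_le_inner (hu : IsUnit A)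
    (hA : ∀ v, θ * ‖v‖ ^ 2 ≤ ⟪v, A v⟫) (v : E) : θ * ‖A⁻¹ʳ v‖ ^ 2 ≤ ⟪v, A⁻¹ʳ v⟫ := by
  simpa only [apply_inverse_apply hu, real_inner_comm] using hA (A⁻¹ʳ v)

theorem norm_inverse_le (hθ : 0 < θ) (hu : IsUnit A)
    (hA : ∀ v, θ * ‖v‖ ^ 2 ≤ ⟪v, A v⟫) : ‖A⁻¹ʳ‖ ≤ θ⁻¹ := by
  refine A⁻¹ʳ.opNorm_le_bound (inv_nonneg.mpr hθ.le) fun v => ?_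
  have h := (mul_sq_norm_inverse_apply_le_inner hu hA v).trans (real_inner_le_norm _ _)
  rw [inv_mul_eq_div, le_div_iff₀ hθ]
  nlinarith [norm_nonneg (A⁻¹ʳ v), norm_nonneg v]

theorem inner_inverse_apply_le (hθ : 0 < θ) (hu : IsUnit A)
    (hA : ∀ v, θ * ‖v‖ ^ 2 ≤ ⟪v, A v⟫) (v : E) : ⟪v, A⁻¹ʳ v⟫ ≤ θ⁻¹ * ‖v‖ ^ 2 :=
  calc ⟪v, A⁻¹ʳ v⟫ ≤ ‖v‖ * (‖A⁻¹ʳ‖ * ‖v‖) :=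
        (real_inner_le_norm _ _).trans (by gcongr; exact A⁻¹ʳ.le_opNorm v)
    _ ≤ ‖v‖ * (θ⁻¹ * ‖v‖) := by gcongr; exact norm_inverse_le hθ hu hA
    _ = θ⁻¹ * ‖v‖ ^ 2 := by ring

theorem mul_sq_norm_le_inner_inverse_apply {C : ℝ} (hθ : 0 ≤ θ) (hu : IsUnit A)
    (hA : ∀ v, θ * ‖v‖ ^ 2 ≤ ⟪v, A v⟫) (hAC : ‖A‖ ≤ C) (v : E) :
    θ * ‖v‖ ^ 2 ≤ C ^ 2 * ⟪v, A⁻¹ʳ v⟫ := by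
  have hv : ‖v‖ ≤ C * ‖A⁻¹ʳ v‖ := by
    simpa only [apply_inverse_apply hu] using A.le_of_opNorm_le hAC (A⁻¹ʳ v)
  calc θ * ‖v‖ ^ 2 ≤ θ * (C * ‖A⁻¹ʳ v‖) ^ 2 := by gcongr
    _ = C ^ 2 * (θ * ‖A⁻¹ʳ v‖ ^ 2) := by ring
    _ ≤ C ^ 2 * ⟪v, A⁻¹ʳ v⟫ := by gcongr; exact mul_sq_norm_inverse_apply_le_inner hu hA v

theorem norm_inverse_sub_inverse_le {B : E →L[ℝ] E} (hθ : 0 < θ) (hu : IsUnit A) (hu' : IsUnit B)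
    (hA : ∀ v, θ * ‖v‖ ^ 2 ≤ ⟪v, A v⟫) (hB : ∀ v, θ * ‖v‖ ^ 2 ≤ ⟪v, B v⟫) :
    ‖A⁻¹ʳ - B⁻¹ʳ‖ ≤ ‖B - A‖ / θ ^ 2 := by
  rw [Ring.inverse_sub_inverse (iff_of_true hu hu')]
  calc _ ≤ ‖A⁻¹ʳ‖ * ‖B - A‖ * ‖B⁻¹ʳ‖ := norm_mul₃_le
    _ ≤ θ⁻¹ * ‖B - A‖ * θ⁻¹ := by
        gcongr
        exacts [norm_inverse_le hθ hu hA, norm_inverse_le hθ hu' hB]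
    _ = ‖B - A‖ / θ ^ 2 := by field_simp

theorem inner_inverse_apply_add_le {B : E →L[ℝ] E} {z q : E} {C : ℝ} (hθ : 0 < θ)
    (hu : IsUnit A) (hA : ∀ v, θ * ‖v‖ ^ 2 ≤ ⟪v, A v⟫) (hAsymm : (A : E →ₗ[ℝ] E).IsSymmetric)
    (hB : ‖B‖ ≤ C) (hzq : ⟪z, q⟫ ≤ C * ‖z‖ ^ 2) :
    ⟪A⁻¹ʳ z, A q + B z⟫ ≤ (C + C / θ) * ‖z‖ ^ 2 := by
  have hAq : ⟪A⁻¹ʳ z, A q⟫ = ⟪z, q⟫ := by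
    simpa only [coe_coe, apply_inverse_apply hu] using (hAsymm (A⁻¹ʳ z) q).symm
  have hBz : ⟪A⁻¹ʳ z, B z⟫ ≤ C / θ * ‖z‖ ^ 2 := calc
    _ ≤ (‖A⁻¹ʳ‖ * ‖z‖) * (‖B‖ * ‖z‖) :=
        (real_inner_le_norm _ _).trans (by gcongr <;> exact le_opNorm _ _)
    _ ≤ (θ⁻¹ * ‖z‖) * (C * ‖z‖) := by gcongr; exact norm_inverse_le hθ hu hA
    _ = C / θ * ‖z‖ ^ 2 := by ring
  rw [inner_add_right, hAq]
  linarith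

theorem neg_mul_inner_inverse_apply_le {B : E →L[ℝ] E} {z q : E} {C : ℝ} (hθ : 0 < θ)
    (hC : 0 ≤ C) (hu : IsUnit A) (hA : ∀ v, θ * ‖v‖ ^ 2 ≤ ⟪v, A v⟫)
    (hAsymm : (A : E →ₗ[ℝ] E).IsSymmetric) (hAC : ‖A‖ ≤ C) (hBC : ‖B‖ ≤ C)
    (hzq : ⟪z, q⟫ ≤ C * ‖z‖ ^ 2) :
    -((2 * C + 2 * C / θ + C / θ ^ 2) * C ^ 2 / θ) * ⟪z, A⁻¹ʳ z⟫
      ≤ 2 * ⟪A⁻¹ʳ z, -(A q) - B z⟫ - C / θ ^ 2 * ‖z‖ ^ 2 := by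
  have hrate := inner_inverse_apply_add_le hθ hu hA hAsymm hBC hzq
  have hg : 0 ≤ ⟪z, A⁻¹ʳ z⟫ :=
    (mul_nonneg hθ.le (sq_nonneg _)).trans (mul_sq_norm_inverse_apply_le_inner hu hA z)
  have hz : ‖z‖ ^ 2 ≤ C ^ 2 / θ * ⟪z, A⁻¹ʳ z⟫ := by
    rw [div_mul_eq_mul_div, le_div_iff₀ hθ, mul_comm]
    exact mul_sq_norm_le_inner_inverse_apply hθ.le hu hA hAC z
  have hM : 0 ≤ 2 * C + 2 * C / θ + C / θ ^ 2 := by positivity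
  calc -((2 * C + 2 * C / θ + C / θ ^ 2) * C ^ 2 / θ) * ⟪z, A⁻¹ʳ z⟫
      = -((2 * C + 2 * C / θ + C / θ ^ 2) * (C ^ 2 / θ * ⟪z, A⁻¹ʳ z⟫)) := by ring
    _ ≤ -((2 * C + 2 * C / θ + C / θ ^ 2) * ‖z‖ ^ 2) := by gcongr
    _ ≤ -2 * ⟪A⁻¹ʳ z, A q + B z⟫ - C / θ ^ 2 * ‖z‖ ^ 2 := by linear_combination 2 * hrate
    _ = 2 * ⟪A⁻¹ʳ z, -(A q) - B z⟫ - C / θ ^ 2 * ‖z‖ ^ 2 := by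
        rw [show -(A q) - B z = -(A q + B z) by abel, inner_neg_right]; ring

end ContinuousLinearMap

theorem HasDerivAt.inner_apply_self {z : ℝ → E} {z' : E} {x : ℝ} {P : E →L[ℝ] E}
    (hP : (P : E →ₗ[ℝ] E).IsSymmetric) (hz : HasDerivAt z z' x) :
    HasDerivAt (fun y => ⟪z y, P (z y)⟫) (2 * ⟪P (z x), z'⟫) x := by
  refine (hz.inner ℝ (P.hasFDerivAt.comp_hasDerivAt x hz)).congr_deriv ?_
  have h := hP (z x) z'
  rw [P.coe_coe] at h
  rw [Function.comp_apply, ← h, real_inner_comm z']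
  ring

theorem eventually_lt_slope_inner_apply_self {z : ℝ → E} {z' : E} {P : ℝ → E →L[ℝ] E}
    {x b L r : ℝ} (hPx : (P x : E →ₗ[ℝ] E).IsSymmetric) (hz : HasDerivAt z z' x) (hxb : x < b)
    (hP : ∀ y ∈ Ioc x b, ‖P x - P y‖ ≤ L * (y - x))
    (hr : r < 2 * ⟪P x (z x), z'⟫ - L * ‖z x‖ ^ 2) :
    ∀ᶠ y in 𝓝[>] x, r < slope (fun t => ⟪z t, P t (z t)⟫) x y := by
  refine eventually_lt_slope_of_hasDerivAt (m := fun y => L * ‖z y‖ ^ 2)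
    (hz.inner_apply_self hPx) ((hz.continuousAt.norm.pow 2).const_mul L).continuousWithinAt ?_ hr
  filter_upwards [Ioc_mem_nhdsGT hxb] with y hy
  have : ⟪z y, (P x - P y) (z y)⟫ ≤ L * ‖z y‖ ^ 2 * (y - x) := calc
    _ ≤ ‖z y‖ * (‖P x - P y‖ * ‖z y‖) :=
        (real_inner_le_norm _ _).trans (by gcongr; exact (P x - P y).le_opNorm _)
    _ ≤ ‖z y‖ * (L * (y - x) * ‖z y‖) := by gcongr; exact hP y hy
    _ = L * ‖z y‖ ^ 2 * (y - x) := by ring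
  simp only [sub_apply, inner_sub_right] at this
  linarith

noncomputable def inverseEnergy (A : ℝ → E →L[ℝ] E) (z : ℝ → E) (t : ℝ) : ℝ :=
  ⟪z t, (A t)⁻¹ʳ (z t)⟫

theorem inverseEnergy_mul_exp_le [CompleteSpace E] {z q : ℝ → E} {A B : ℝ → E →L[ℝ] E}
    {a b C θ : ℝ} (hθ : 0 < θ) (hC : 0 ≤ C)
    (hz : ∀ t ∈ Icc a b, HasDerivAt z (-(A t (q t)) - B t (z t)) t)
    (hzq : ∀ t ∈ Icc a b, ⟪z t, q t⟫ ≤ C * ‖z t‖ ^ 2)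
    (hAbd : ∀ t ∈ Icc a b, ‖A t‖ ≤ C) (hBbd : ∀ t ∈ Icc a b, ‖B t‖ ≤ C)
    (hAsymm : ∀ t ∈ Icc a b, (A t : E →ₗ[ℝ] E).IsSymmetric)
    (hApos : ∀ t ∈ Icc a b, ∀ v, θ * ‖v‖ ^ 2 ≤ ⟪v, A t v⟫)
    (hAlip : ∀ s ∈ Icc a b, ∀ t ∈ Icc a b, ‖A t - A s‖ ≤ C * |t - s|) :
    ∀ t ∈ Icc a b,
      inverseEnergy A z a * exp (-((2 * C + 2 * C / θ + C / θ ^ 2) * C ^ 2 / θ) * (t - a))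
        ≤ inverseEnergy A z t := by
  have hunit t (ht : t ∈ Icc a b) : IsUnit (A t) :=
    ContinuousLinearMap.isUnit_of_coercive hθ (hApos t ht)
  have hNlip s (hs : s ∈ Icc a b) t (ht : t ∈ Icc a b) :
      ‖(A s)⁻¹ʳ - (A t)⁻¹ʳ‖ ≤ C / θ ^ 2 * |t - s| :=
    (ContinuousLinearMap.norm_inverse_sub_inverse_le hθ (hunit s hs) (hunit t ht) (hApos s hs)
      (hApos t ht)).trans (by rw [div_mul_eq_mul_div]; gcongr; exact hAlip s hs t ht)
  have hzcont : ContinuousOn z (Icc a b) := fun t ht => (hz t ht).continuousAt.continuousWithinAt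
  have hNcont : ContinuousOn (fun t => (A t)⁻¹ʳ) (Icc a b) :=
    (LipschitzOnWith.of_dist_le' fun s hs t ht => by
      rw [dist_eq_norm, Real.dist_eq, abs_sub_comm]; exact hNlip s hs t ht).continuousOn
  refine mul_exp_le_of_frequently_lt_slope (hzcont.inner (hNcont.clm_apply hzcont))
    fun x hx r hr => ?_
  have hxI := Ico_subset_Icc_self hx
  refine (eventually_lt_slope_inner_apply_self (P := fun t => (A t)⁻¹ʳ)
    (ContinuousLinearMap.isSymmetric_inverse (hAsymm x hxI)) (hz x hxI) hx.2 (fun y hy => ?_)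
    (hr.trans_le (ContinuousLinearMap.neg_mul_inner_inverse_apply_le hθ hC (hunit x hxI)
      (hApos x hxI) (hAsymm x hxI) (hAbd x hxI) (hBbd x hxI) (hzq x hxI)))).frequently
  simpa [abs_of_pos (sub_pos.2 hy.1)] using hNlip x hxI y ⟨hx.1.trans hy.1.le, hy.2⟩

end InnerProductSpace

theorem stmt_5_general {d : ℕ} (T C θ : ℝ) (hT : 0 < T) (hC : 0 < C) (hθ : 0 < θ)
    (z q : ℝ → EuclideanSpace ℝ (Fin d))
    (A B : ℝ → EuclideanSpace ℝ (Fin d) →L[ℝ] EuclideanSpace ℝ (Fin d))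
    (hzC1 : ∀ t, HasDerivAt z (-(A t (q t)) - B t (z t)) t)
    (hzq : ∀ t ∈ Icc 0 T, (inner ℝ (z t) (q t) : ℝ) ≤ C * ‖z t‖ ^ 2)
    (hAbd : ∀ t ∈ Icc 0 T, ‖A t‖ ≤ C)
    (hBbd : ∀ t ∈ Icc 0 T, ‖B t‖ ≤ C)
    (hAsymm : ∀ t ∈ Icc 0 T, ∀ v w, (inner ℝ (A t v) w : ℝ) = inner ℝ v (A t w))
    (hApos : ∀ t ∈ Icc 0 T, ∀ v, θ * ‖v‖ ^ 2 ≤ (inner ℝ v (A t v) : ℝ))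
    (hAlip : ∀ t₁ ∈ Icc 0 T, ∀ t₂ ∈ Icc 0 T, ‖A t₂ - A t₁‖ ≤ C * |t₂ - t₁|) :
    ∃ C₁ > 0, ∀ t ∈ Icc 0 T, C₁ * ‖z 0‖ ≤ ‖z t‖ := by
  have hgrowth := inverseEnergy_mul_exp_le hθ hC.le (fun t _ => hzC1 t) hzq hAbd hBbd hAsymm
    hApos hAlip
  set K := (2 * C + 2 * C / θ + C / θ ^ 2) * C ^ 2 / θ
  simp only [sub_zero] at hgrowth
  have hT0 : (0 : ℝ) ∈ Icc 0 T := ⟨le_rfl, hT.le⟩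
  have hz0 := ContinuousLinearMap.mul_sq_norm_le_inner_inverse_apply hθ.le
    (ContinuousLinearMap.isUnit_of_coercive hθ (hApos 0 hT0)) (hApos 0 hT0) (hAbd 0 hT0) (z 0)
  refine ⟨θ / C * exp (-K * T / 2), by positivity, fun t ht => ?_⟩
  have hzt := ContinuousLinearMap.inner_inverse_apply_le hθ
    (ContinuousLinearMap.isUnit_of_coercive hθ (hApos t ht)) (hApos t ht) (z t)
  have hexp : exp (-K * T) ≤ exp (-K * t) := by
    have hK : 0 ≤ K := by positivity
    exact exp_le_exp.2 (by nlinarith [ht.2])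
  rw [← pow_le_pow_iff_left₀ (by positivity) (norm_nonneg _) two_ne_zero]
  calc (θ / C * exp (-K * T / 2) * ‖z 0‖) ^ 2
        = θ / C ^ 2 * (θ * ‖z 0‖ ^ 2) * exp (-K * T) := by
        rw [mul_pow, mul_pow, div_pow, ← exp_nat_mul]; push_cast; ring_nf
    _ ≤ θ / C ^ 2 * (θ * ‖z 0‖ ^ 2) * exp (-K * t) := by gcongr
    _ ≤ θ / C ^ 2 * (C ^ 2 * inverseEnergy A z 0) * exp (-K * t) := by
        gcongr θ / C ^ 2 * ?_ * _; exact hz0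
    _ = θ * (inverseEnergy A z 0 * exp (-K * t)) := by field_simp
    _ ≤ θ * inverseEnergy A z t := by gcongr; exact hgrowth t ht
    _ ≤ ‖z t‖ ^ 2 := by rw [← le_div_iff₀' hθ, div_eq_inv_mul]; exact hzt

/-- Lemma 5 of the paper: non-degeneracy of a linear ODE
`ż = -A q - B z` with `A` symmetric, uniformly positive definite, bounded
and Lipschitz in time, under the bounds `|z| , |q| ≤ C`, `z·q ≤ C|z|²`.
Then `|z(t)| ≥ C₁ |z(0)|` on `[0,T]`. -/
theorem stmt_5 {d : ℕ} (T C θ : ℝ) (hT : 0 < T) (hC : 0 < C) (hθ : 0 < θ)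
    (z q : ℝ → EuclideanSpace ℝ (Fin d))
    (A B : ℝ → EuclideanSpace ℝ (Fin d) →L[ℝ] EuclideanSpace ℝ (Fin d))
    (hAcont : Continuous A) (hBcont : Continuous B)
    (hzC1 : ∀ t, HasDerivAt z (-(A t (q t)) - B t (z t)) t)
    (hqC1 : ∀ t, DifferentiableAt ℝ q t)
    (hzbd : ∀ t ∈ Icc 0 T, ‖z t‖ ≤ C)
    (hqbd : ∀ t ∈ Icc 0 T, ‖q t‖ ≤ C)
    (hzq : ∀ t ∈ Icc 0 T, (inner ℝ (z t) (q t) : ℝ) ≤ C * ‖z t‖ ^ 2)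
    (hAbd : ∀ t ∈ Icc 0 T, ‖A t‖ ≤ C)
    (hBbd : ∀ t ∈ Icc 0 T, ‖B t‖ ≤ C)
    (hAsymm : ∀ t ∈ Icc 0 T, ∀ v w, (inner ℝ (A t v) w : ℝ) = inner ℝ v (A t w))
    (hApos : ∀ t ∈ Icc 0 T, ∀ v, θ * ‖v‖ ^ 2 ≤ (inner ℝ v (A t v) : ℝ))
    (hAlip : ∀ t₁ ∈ Icc 0 T, ∀ t₂ ∈ Icc 0 T, ‖A t₂ - A t₁‖ ≤ C * |t₂ - t₁|) :
    ∃ C₁ > 0, ∀ t ∈ Icc 0 T, C₁ * ‖z 0‖ ≤ ‖z t‖ :=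
  stmt_5_general T C θ hT hC hθ z q A B hzC1 hzq hAbd hBbd hAsymm hApos hAlip
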